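/- arXiv:1504.08191 — 7 statements merged into one kernel-verified Lean document; each statement's English description precedes it below -/
import Mathlib

section
/- If the induced hyperspace system (K(X), T_K) is weakly rigid (every finite tuple of points of K(X) is recurrent under the product map), then (X,T) is uniformly rigid. -/
open TopologicalSpace Metric Set

/-- The induced map `T_K` on the hyperspace of nonempty compact subsets. -/
noncomputable def inducedMap {X : Type*} [MetricSpace X] {T : X → X} (hT : Continuous T)
    (A : NonemptyCompacts X) : NonemptyCompacts X :=
  ⟨⟨T '' A, A.isCompact.image hT⟩, A.nonempty.image T⟩

/-- A point `x` is (positively) recurrent for `T` if some subsequence of iterates,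
with times tending to infinity, returns arbitrarily close to `x`. -/
def RecurrentPt {Y : Type*} [MetricSpace Y] (T : Y → Y) (x : Y) : Prop :=
  ∀ ε > (0:ℝ), ∀ N : ℕ, ∃ n ≥ N, dist (T^[n] x) x < ε

/-- A system is weakly rigid if every finite tuple of points is recurrent under the
product map (equivalently, simultaneously recurrent). -/
def WeaklyRigid {Y : Type*} [MetricSpace Y] (T : Y → Y) : Prop :=
  ∀ (n : ℕ) (A : Fin n → Y), ∀ ε > (0:ℝ), ∀ N : ℕ, ∃ j ≥ N, ∀ i, dist (T^[j] (A i)) (A i) < ε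

/-- A system is uniformly rigid if for every `ε > 0` there is `n ≥ 1` with
`d(T^n x, x) < ε` for every `x`. -/
def UniformlyRigid {X : Type*} [MetricSpace X] (T : X → X) : Prop :=
  ∀ ε > (0:ℝ), ∃ n ≥ 1, ∀ x, dist (T^[n] x) x < ε

lemma inducedMap_iterate {X : Type*} [MetricSpace X] {T : X → X} (hT : Continuous T)
    (A : NonemptyCompacts X) (j : ℕ) :
    ((inducedMap hT)^[j] A : Set X) = T^[j] '' A := by
  induction j with
  | zero => simp
  | succ n ih =>
    rw [Function.iterate_succ_apply']
    show T '' ((inducedMap hT)^[n] A : Set X) = _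
    rw [ih, ← Set.image_comp, ← Function.iterate_succ' T]

theorem uniformlyRigid_of_weaklyRigid_induced {X : Type*} [MetricSpace X] [CompactSpace X]
    (T : X → X) (hT : Continuous T) (hsurj : Function.Surjective T)
    (h : WeaklyRigid (inducedMap hT)) :
    UniformlyRigid T := by
  intro ε hε
  have h5 : (0:ℝ) < ε / 5 := by linarith
  obtain ⟨t, -, htfin, hcov⟩ :=
    finite_cover_balls_of_compact (isCompact_univ (X := X)) h5
  obtain ⟨m, e, he⟩ := htfin.fin_embedding
  -- tuple of closed balls indexed by Fin m
  set A : Fin m → NonemptyCompacts X := fun i =>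
    ⟨⟨closedBall (e i) (ε/5), isCompact_closedBall _ _⟩,
      ⟨e i, mem_closedBall_self h5.le⟩⟩ with hA
  obtain ⟨j, hj1, hjd⟩ := h m A (ε/5) h5 1
  refine ⟨j, hj1, fun x => ?_⟩
  -- find a net point near x
  have hx : x ∈ ⋃ y ∈ t, ball y (ε/5) := hcov (mem_univ x)
  simp only [mem_iUnion] at hx
  obtain ⟨c, hct, hxc⟩ := hx
  rw [← he] at hct
  obtain ⟨i, rfl⟩ := hct
  -- Hausdorff distance bound for ball i
  have hd : hausdorffDist (((inducedMap hT)^[j] (A i) : NonemptyCompacts X) : Set X)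
      ((A i : Set X)) < ε/5 := hjd i
  have hmem : T^[j] x ∈ (((inducedMap hT)^[j] (A i) : NonemptyCompacts X) : Set X) := by
    rw [inducedMap_iterate]
    exact ⟨x, ball_subset_closedBall hxc, rfl⟩
  have hfin : EMetric.hausdorffEdist
      (((inducedMap hT)^[j] (A i) : NonemptyCompacts X) : Set X) ((A i : Set X)) ≠ ⊤ :=
    hausdorffEdist_ne_top_of_nonempty_of_bounded
      ((inducedMap hT)^[j] (A i)).nonempty (A i).nonempty
      ((inducedMap hT)^[j] (A i)).isCompact.isBounded (A i).isCompact.isBounded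
  have hinf : infDist (T^[j] x) ((A i : Set X)) < ε/5 :=
    lt_of_le_of_lt (infDist_le_hausdorffDist_of_mem hmem hfin) hd
  obtain ⟨y, hy, hdy⟩ := (infDist_lt_iff (A i).nonempty).1 hinf
  have hyc : dist y (e i) ≤ ε/5 := mem_closedBall.1 hy
  have hxc' : dist x (e i) < ε/5 := mem_ball.1 hxc
  calc dist (T^[j] x) x ≤ dist (T^[j] x) y + dist y (e i) + dist (e i) x :=
        dist_triangle4 _ _ _ _
    _ < ε/5 + ε/5 + ε/5 := by rw [dist_comm (e i) x]; linarith
    _ < ε := by linarith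
end

section
/- If the hyperspace system (K(X), T_K) is pointwise minimal (every point of K(X) is an almost periodic point), then (X,T) is distal, i.e. the only proximal pairs are diagonal pairs. -/
/-!
A proximal pair `(x, y)` has a diagonal point `(z, z)` in the orbit closure of `(x, y)` under
`T × T`. Pushing this forward along the continuous map `(a, b) ↦ {a, b}`, which intertwines
`T × T` with `T_K`, puts `{z}` in the `T_K`-orbit closure of `{x, y}`. Minimality of `{x, y}`
then puts `{x, y}` in the orbit closure of `{z}`, which consists of singletons only, being the
closure of the singletons `{T^[n] z}`; hence `x = y`.
-/

open TopologicalSpace Metric Set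

/-- The (forward) orbit closure of a point. -/
def orbitClosure {Y : Type*} [TopologicalSpace Y] (T : Y → Y) (x : Y) : Set Y :=
  closure (Set.range fun n : ℕ => T^[n] x)

/-- A point is minimal (almost periodic) if its orbit closure is a minimal set:
every point of the orbit closure has the original point in its own orbit closure. -/
def MinimalPt {Y : Type*} [TopologicalSpace Y] (T : Y → Y) (x : Y) : Prop :=
  ∀ y ∈ orbitClosure T x, x ∈ orbitClosure T y

/-- A pair is proximal if the orbits approach each other along a sequence of times
tending to infinity. -/
def ProximalPair {X : Type*} [MetricSpace X] (T : X → X) (x y : X) : Prop :=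
  ∀ ε > (0:ℝ), ∀ N : ℕ, ∃ n ≥ N, dist (T^[n] x) (T^[n] y) < ε

theorem Function.Semiconj.mapsTo_orbitClosure {Y Z : Type*} [TopologicalSpace Y]
    [TopologicalSpace Z] {f : Y → Z} {g : Y → Y} {g' : Z → Z} (h : Function.Semiconj f g g')
    (hf : Continuous f) (y : Y) : MapsTo f (orbitClosure g y) (orbitClosure g' (f y)) := by
  refine MapsTo.closure ?_ hf
  rintro _ ⟨n, rfl⟩
  exact ⟨n, (h.iterate_right n y).symm⟩

theorem ProximalPair.exists_diagonal_mem_orbitClosure {X : Type*} [MetricSpace X]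
    [CompactSpace X] {T : X → X} {x y : X} (hxy : ProximalPair T x y) :
    ∃ z, (z, z) ∈ orbitClosure (Prod.map T T) (x, y) := by
  have hK : IsCompact (orbitClosure (Prod.map T T) (x, y)) := isClosed_closure.isCompact
  obtain ⟨p, hp, hmin⟩ := hK.exists_isMinOn ⟨(x, y), subset_closure ⟨0, rfl⟩⟩
    (continuous_fst.dist continuous_snd).continuousOn
  have hdiag : p.1 = p.2 := by
    refine eq_of_forall_dist_le fun ε hε => ?_
    obtain ⟨n, -, hn⟩ := hxy ε hε 0
    have hmem : (T^[n] x, T^[n] y) ∈ orbitClosure (Prod.map T T) (x, y) :=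
      subset_closure ⟨n, by simp [Prod.map_iterate]⟩
    exact (hmin hmem).trans hn.le
  exact ⟨p.1, by rwa [← Prod.mk.eta (p := p), ← hdiag] at hp⟩

section Hyperspace

variable {X : Type*} [MetricSpace X] {T : X → X} (hT : Continuous T)

theorem inducedMap_eq_map : inducedMap hT = NonemptyCompacts.map T hT := rfl

theorem semiconj_singleton_inducedMap :
    Function.Semiconj (fun x : X => ({x} : NonemptyCompacts X)) T (inducedMap hT) :=
  fun x => by rw [inducedMap_eq_map, NonemptyCompacts.map_singleton]

theorem semiconj_pair_inducedMap :
    Function.Semiconj (fun p : X × X => ({p.1} ⊔ {p.2} : NonemptyCompacts X)) (Prod.map T T)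
      (inducedMap hT) := fun p => by
  ext1
  simp [inducedMap_eq_map, NonemptyCompacts.coe_sup, image_insert_eq]

theorem continuous_pair :
    Continuous fun p : X × X => ({p.1} ⊔ {p.2} : NonemptyCompacts X) :=
  NonemptyCompacts.lipschitz_sup.continuous.comp
    (NonemptyCompacts.isometry_singleton.continuous.prodMap
      NonemptyCompacts.isometry_singleton.continuous)

theorem orbitClosure_inducedMap_singleton_subset [CompleteSpace X] (z : X) :
    orbitClosure (inducedMap hT) {z} ⊆ range ({·} : X → NonemptyCompacts X) := by
  refine closure_minimal ?_ NonemptyCompacts.isometry_singleton.isClosedEmbedding.isClosed_range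
  rintro _ ⟨n, rfl⟩
  exact ⟨T^[n] z, (semiconj_singleton_inducedMap hT).iterate_right n z⟩

end Hyperspace

theorem distal_of_pointwise_minimal_induced_general {X : Type*} [MetricSpace X] [CompactSpace X]
    (T : X → X) (hT : Continuous T)
    (h : ∀ A : NonemptyCompacts X, MinimalPt (inducedMap hT) A) :
    ∀ x y : X, ProximalPair T x y → x = y := by
  intro x y hxy
  obtain ⟨z, hz⟩ := hxy.exists_diagonal_mem_orbitClosure
  have hzK : {z} ∈ orbitClosure (inducedMap hT) ({x} ⊔ {y}) := by
    simpa using (semiconj_pair_inducedMap hT).mapsTo_orbitClosure continuous_pair _ hz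
  obtain ⟨w, hw⟩ := orbitClosure_inducedMap_singleton_subset hT z (h _ _ hzK)
  have hxy_eq : ({x, y} : Set X) = {w} := by
    simpa [NonemptyCompacts.coe_sup, union_singleton, pair_comm] using congrArg SetLike.coe hw.symm
  exact (subsingleton_singleton.anti hxy_eq.le) (mem_insert x {y}) (mem_insert_of_mem x rfl)

theorem distal_of_pointwise_minimal_induced {X : Type*} [MetricSpace X] [CompactSpace X]
    (T : X → X) (hT : Continuous T) (hsurj : Function.Surjective T)
    (h : ∀ A : NonemptyCompacts X, MinimalPt (inducedMap hT) A) :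
    ∀ x y : X, ProximalPair T x y → x = y :=
  distal_of_pointwise_minimal_induced_general T hT h
end

section
/- If the hyperspace system (K(X), T_K) is pointwise minimal, then every point of (X,T) is locally almost periodic: for every x ∈ X and every open neighborhood U of x, there is an open neighborhood V of x and a syndetic set F ⊆ ℤ₊ such that T^n V ⊆ U for all n ∈ F. -/
open TopologicalSpace Metric Set

/-- A set of nonnegative integers is syndetic if it has bounded gaps. -/
def SyndeticNat (F : Set ℕ) : Prop :=
  ∃ N : ℕ, ∀ m : ℕ, ∃ n ∈ F, m ≤ n ∧ n ≤ m + N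

/-!
Shrink `U` to a closed neighbourhood `C` of `x`. The compact set `C` lies in the Vietoris-open set
`{B | B ⊆ U}` of the hyperspace, so minimality of `C` under `T_K` makes the times `n` with
`T^n C ⊆ U` syndetic; the interior of `C` is the required `V`.
-/

theorem continuous_inducedMap {X : Type*} [MetricSpace X] {T : X → X} (hT : Continuous T) :
    Continuous (inducedMap hT) :=
  hT.nonemptyCompacts_map

theorem coe_inducedMap_iterate {X : Type*} [MetricSpace X] {T : X → X} (hT : Continuous T)
    (A : NonemptyCompacts X) (n : ℕ) :
    ((inducedMap hT)^[n] A : Set X) = T^[n] '' A := by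
  induction n with
  | zero => simp
  | succ n ih =>
    rw [Function.iterate_succ_apply', Function.iterate_succ', image_comp, ← ih]
    rfl

theorem MinimalPt.syndeticNat_setOf_iterate_mem {Y : Type*} [TopologicalSpace Y] [CompactSpace Y]
    {S : Y → Y} {a : Y} (ha : MinimalPt S a) (hS : Continuous S) {W : Set Y} (hW : IsOpen W)
    (haW : a ∈ W) : SyndeticNat {n | S^[n] a ∈ W} := by
  -- Every point of the compact orbit closure enters `W`, so finitely many `S^[k] ⁻¹' W` cover it.
  have hcover : orbitClosure S a ⊆ ⋃ k : ℕ, S^[k] ⁻¹' W := fun y hy ↦ by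
    obtain ⟨_, hzW, k, rfl⟩ := mem_closure_iff.1 (ha y hy) W hW haW
    exact mem_iUnion.2 ⟨k, hzW⟩
  obtain ⟨s, hs⟩ := isClosed_closure.isCompact.elim_finite_subcover _
    (fun k ↦ hW.preimage (hS.iterate k)) hcover
  refine ⟨s.sup id, fun m ↦ ?_⟩
  obtain ⟨k, hks, hk⟩ := mem_iUnion₂.1 (hs (subset_closure ⟨m, rfl⟩))
  refine ⟨k + m, ?_, Nat.le_add_left m k, ?_⟩
  · rwa [mem_ofPred_eq, Function.iterate_add_apply]
  · have : k ≤ s.sup id := Finset.le_sup (f := id) hks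
    omega

theorem locallyAlmostPeriodic_of_pointwise_minimal_induced_general {X : Type*} [MetricSpace X]
    [CompactSpace X] (T : X → X) (hT : Continuous T)
    (h : ∀ A : NonemptyCompacts X, MinimalPt (inducedMap hT) A) :
    ∀ x : X, ∀ U : Set X, IsOpen U → x ∈ U →
      ∃ V : Set X, IsOpen V ∧ x ∈ V ∧
        ∃ F : Set ℕ, SyndeticNat F ∧ ∀ n ∈ F, T^[n] '' V ⊆ U := by
  intro x U hU hxU
  obtain ⟨C, hCx, hC, hCU⟩ := exists_mem_nhds_isClosed_subset (hU.mem_nhds hxU)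
  let A : NonemptyCompacts X := ⟨⟨C, hC.isCompact⟩, ⟨x, mem_of_mem_nhds hCx⟩⟩
  have hreturn : SyndeticNat {n | (inducedMap hT)^[n] A ∈ {B : NonemptyCompacts X | ↑B ⊆ U}} :=
    (h A).syndeticNat_setOf_iterate_mem (continuous_inducedMap hT)
      (NonemptyCompacts.isOpen_subsets_of_isOpen hU) hCU
  refine ⟨interior C, isOpen_interior, mem_interior_iff_mem_nhds.2 hCx, _, hreturn, fun n hn ↦ ?_⟩
  rw [mem_ofPred_eq, mem_ofPred_eq, coe_inducedMap_iterate] at hn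
  exact (image_mono interior_subset).trans hn

theorem locallyAlmostPeriodic_of_pointwise_minimal_induced {X : Type*} [MetricSpace X]
    [CompactSpace X] (T : X → X) (hT : Continuous T) (hsurj : Function.Surjective T)
    (h : ∀ A : NonemptyCompacts X, MinimalPt (inducedMap hT) A) :
    ∀ x : X, ∀ U : Set X, IsOpen U → x ∈ U →
      ∃ V : Set X, IsOpen V ∧ x ∈ V ∧
        ∃ F : Set ℕ, SyndeticNat F ∧ ∀ n ∈ F, T^[n] '' V ⊆ U :=
  locallyAlmostPeriodic_of_pointwise_minimal_induced_general T hT h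
end

section
/- An invertible topological dynamical system (X,T) on a compact metric space is equicontinuous if and only if it is distal and locally almost periodic. -/
open Metric Set

/-- The `n`-th iterate (with `n : ℤ`) of a homeomorphism. -/
def zIter {X : Type*} [TopologicalSpace X] (T : X ≃ₜ X) : ℤ → X → X
  | Int.ofNat n => (⇑T)^[n]
  | Int.negSucc n => (⇑T.symm)^[n + 1]

/-- Equicontinuity: a single modulus of continuity works for all forward iterates. -/
def Equicontinuous' {X : Type*} [MetricSpace X] (T : X → X) : Prop :=
  ∀ ε > (0:ℝ), ∃ δ > (0:ℝ), ∀ x y : X, dist x y < δ → ∀ n : ℕ, dist (T^[n] x) (T^[n] y) < ε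

/-- Distality: distinct points never become arbitrarily close under forward iteration. -/
def Distal {X : Type*} [MetricSpace X] (T : X → X) : Prop :=
  ∀ x y : X, x ≠ y → ∃ δ > (0:ℝ), ∀ n : ℕ, δ ≤ dist (T^[n] x) (T^[n] y)

/-- A set of integers is syndetic if it has bounded gaps. -/
def SyndeticInt (F : Set ℤ) : Prop :=
  ∃ N : ℕ, ∀ m : ℤ, ∃ n ∈ F, m ≤ n ∧ n ≤ m + N

/-- Local almost periodicity: every neighborhood is entered syndetically often by a
whole neighborhood. -/
def LocallyAlmostPeriodic {X : Type*} [MetricSpace X] (T : X ≃ₜ X) : Prop :=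
  ∀ x : X, ∀ U : Set X, IsOpen U → x ∈ U →
    ∃ V : Set X, IsOpen V ∧ x ∈ V ∧
      ∃ F : Set ℤ, SyndeticInt F ∧ ∀ n ∈ F, zIter T n '' V ⊆ U

/-!
Forward equicontinuity forces equicontinuity of the whole `ℤ`-action: by compactness of `X × X`
the backward orbit of a pair `(x, y)` comes back close to itself after any prescribed gap, and
pushing two such close backward points forward by one common iterate shows that, for `n < 0`,
`(Tⁿx, Tⁿy)` is shadowed by a forward image of `(x, y)`. For the `ℤ`-action, a pair that gets
close at some time was already close at time `0` (distality), and a finite net of the orbit of `x`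
bounds the gaps between returns of `x` (local almost periodicity).

Conversely, if equicontinuity fails at `x₀`, compactness gives `a ≠ b` and points `y → x₀` with
`(Tⁿx₀, Tⁿy) → (a, b)`. Local almost periodicity at `x₀` brings `Tⁿx₀` and `Tⁿy` back close to
`x₀` after `r ≤ N` further steps, with `N` independent of `n`; by continuity of the finitely many
iterates `Tʳ`, `r ≤ N`, the points `Tʳa` and `Tʳb` are then arbitrarily close, contradicting
distality.
-/

open Filter Topology

theorem Homeomorph.coe_pow {X : Type*} [TopologicalSpace X] (T : X ≃ₜ X) (n : ℕ) :
    ⇑(T ^ n) = (⇑T)^[n] := by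
  induction n with
  | zero => rfl
  | succ n ih => rw [pow_succ', Function.iterate_succ', ← ih]; rfl

section ZIter

variable {X : Type*} [TopologicalSpace X] (T : X ≃ₜ X)

theorem zIter_natCast (n : ℕ) : zIter T n = (⇑T)^[n] := rfl

theorem zIter_eq_coe_zpow (n : ℤ) : zIter T n = ⇑(T ^ n) := by
  cases n with
  | ofNat n => exact (T.coe_pow n).symm
  | negSucc n => rw [zpow_negSucc, ← inv_pow]; exact (T⁻¹.coe_pow (n + 1)).symm

theorem zIter_add_apply (m n : ℤ) (x : X) : zIter T (m + n) x = zIter T m (zIter T n x) := by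
  simp only [zIter_eq_coe_zpow, zpow_add, Homeomorph.mul_apply]

theorem zIter_neg_apply_zIter (n : ℤ) (x : X) : zIter T (-n) (zIter T n x) = x := by
  rw [← zIter_add_apply, neg_add_cancel, zIter_eq_coe_zpow, zpow_zero, Homeomorph.one_apply]

end ZIter

theorem equicontinuous'_iff_uniformEquicontinuous {X : Type*} [MetricSpace X] (T : X → X) :
    Equicontinuous' T ↔ UniformEquicontinuous fun n : ℕ => T^[n] :=
  Metric.uniformEquicontinuous_iff.symm

theorem exists_add_le_and_dist_lt {X : Type*} [PseudoMetricSpace X] [CompactSpace X]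
    (u : ℕ → X) {δ : ℝ} (hδ : 0 < δ) (m : ℕ) : ∃ i j, i + m ≤ j ∧ dist (u i) (u j) < δ := by
  obtain ⟨a, -, φ, hφ, hlim⟩ := isCompact_univ.tendsto_subseq fun n => mem_univ (u n)
  obtain ⟨N, hN⟩ := Metric.cauchySeq_iff'.mp hlim.cauchySeq δ hδ
  refine ⟨φ N, φ (m + N), by linarith [hφ.add_le_nat m N], ?_⟩
  rw [dist_comm]; exact hN (m + N) (Nat.le_add_left N m)

section ZAction

variable {X : Type*} [MetricSpace X] {T : X ≃ₜ X}

theorem uniformEquicontinuous_zIter [CompactSpace X]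
    (h : UniformEquicontinuous fun n : ℕ => (⇑T)^[n]) :
    UniformEquicontinuous fun n : ℤ => zIter T n := by
  rw [Metric.uniformEquicontinuous_iff] at h ⊢
  intro ε hε
  obtain ⟨δ, hδ, hT⟩ := h (ε / 3) (by positivity)
  refine ⟨δ, hδ, fun x y hxy n => ?_⟩
  obtain ⟨i, j, hij, hd⟩ := exists_add_le_and_dist_lt
    (fun k : ℕ => (zIter T (-k) x, zIter T (-k) y)) hδ n.natAbs
  rw [Prod.dist_eq, max_lt_iff] at hd
  set l := (n + j - i).toNat
  have hj (z : X) : (⇑T)^[l + i] (zIter T (-j) z) = zIter T n z := by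
    rw [← zIter_natCast, ← zIter_add_apply]; congr 1; omega
  have hi (z : X) : (⇑T)^[l + i] (zIter T (-i) z) = (⇑T)^[l] z := by
    rw [← zIter_natCast, ← zIter_add_apply, ← zIter_natCast]; congr 1; omega
  have hshadow (z : X) (hz : dist (zIter T (-i) z) (zIter T (-j) z) < δ) :
      dist (zIter T n z) ((⇑T)^[l] z) < ε / 3 := by
    rw [← hj, ← hi]; exact hT _ _ (dist_comm (α := X) _ _ ▸ hz) _
  calc dist (zIter T n x) (zIter T n y)
      ≤ dist (zIter T n x) ((⇑T)^[l] x) + dist ((⇑T)^[l] x) ((⇑T)^[l] y)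
          + dist ((⇑T)^[l] y) (zIter T n y) := dist_triangle4 _ _ _ _
    _ < ε / 3 + ε / 3 + ε / 3 := by
        gcongr
        · exact hshadow x hd.1
        · exact hT x y hxy l
        · rw [dist_comm]; exact hshadow y hd.2
    _ = ε := by ring

theorem distal_of_uniformEquicontinuous_zIter (h : UniformEquicontinuous fun n : ℤ => zIter T n) :
    Distal T := by
  intro x y hxy
  obtain ⟨δ, hδ, hT⟩ := Metric.uniformEquicontinuous_iff.mp h (dist x y) (dist_pos.mpr hxy)
  refine ⟨δ, hδ, fun n => not_lt.mp fun hn => ?_⟩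
  have := hT _ _ hn (-n)
  rw [← zIter_natCast, zIter_neg_apply_zIter, zIter_neg_apply_zIter] at this
  exact lt_irrefl _ this

theorem syndeticInt_setOf_dist_zIter_lt [CompactSpace X]
    (h : UniformEquicontinuous fun n : ℤ => zIter T n) (x : X) {ε : ℝ} (hε : 0 < ε) :
    SyndeticInt {n | dist (zIter T n x) x < ε} := by
  obtain ⟨δ, hδ, hT⟩ := Metric.uniformEquicontinuous_iff.mp h ε hε
  have hcover : closure (range fun n => zIter T n x) ⊆ ⋃ n, ball (zIter T n x) δ := fun z hz =>
    mem_iUnion.2 ((Metric.mem_closure_range_iff.1 hz δ hδ).imp fun _ => mem_ball.2)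
  obtain ⟨G, hG⟩ := isClosed_closure.isCompact.elim_finite_subcover _ (fun _ => isOpen_ball) hcover
  refine ⟨2 * G.sup Int.natAbs, fun m => ?_⟩
  obtain ⟨g, hgG, hg⟩ : ∃ g ∈ G, dist (zIter T (m + G.sup Int.natAbs) x) (zIter T g x) < δ := by
    simpa using hG (subset_closure (mem_range_self _))
  have hgM : g.natAbs ≤ G.sup Int.natAbs := Finset.le_sup hgG
  refine ⟨-g + (m + G.sup Int.natAbs), ?_, by omega, by omega⟩
  have := hT _ _ hg (-g)
  rwa [zIter_neg_apply_zIter, ← zIter_add_apply] at this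

theorem locallyAlmostPeriodic_of_uniformEquicontinuous_zIter [CompactSpace X]
    (h : UniformEquicontinuous fun n : ℤ => zIter T n) : LocallyAlmostPeriodic T := by
  intro x U hU hxU
  obtain ⟨ε, hε, hεU⟩ := Metric.isOpen_iff.mp hU x hxU
  obtain ⟨δ, hδ, hT⟩ := Metric.uniformEquicontinuous_iff.mp h (ε / 2) (half_pos hε)
  refine ⟨ball x δ, isOpen_ball, mem_ball_self hδ, _,
    syndeticInt_setOf_dist_zIter_lt h x (half_pos hε), ?_⟩
  rintro n hn _ ⟨y, hy, rfl⟩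
  apply hεU
  calc dist (zIter T n y) x ≤ dist (zIter T n y) (zIter T n x) + dist (zIter T n x) x :=
        dist_triangle _ _ _
    _ < ε / 2 + ε / 2 := add_lt_add (hT y x hy n) hn
    _ = ε := add_halves ε

end ZAction

theorem exists_ne_of_not_equicontinuousAt {ι X Y : Type*} [PseudoMetricSpace X] [MetricSpace Y]
    [CompactSpace Y] {F : ι → X → Y} {x₀ : X} (h : ¬EquicontinuousAt F x₀) :
    ∃ a b, a ≠ b ∧ ∀ ρ > 0, ∃ y i, dist y x₀ < ρ ∧ dist (F i x₀) a < ρ ∧ dist (F i y) b < ρ := by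
  rw [Metric.equicontinuousAt_iff] at h
  push Not at h
  obtain ⟨ε, hε, h⟩ := h
  choose y hy i hi using fun k : ℕ => h (1 / (k + 1)) Nat.one_div_pos_of_nat
  obtain ⟨⟨a, b⟩, -, φ, hφ, hlim⟩ := isCompact_univ.tendsto_subseq
    (x := fun k => (F (i k) x₀, F (i k) (y k))) fun _ => mem_univ _
  have hyφ : Tendsto (y ∘ φ) atTop (𝓝 x₀) := tendsto_iff_dist_tendsto_zero.2 <|
    squeeze_zero (fun _ => dist_nonneg) (fun k => (hy (φ k)).le)
      (tendsto_one_div_add_atTop_nhds_zero_nat.comp hφ.tendsto_atTop)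
  refine ⟨a, b, fun hab => hε.not_ge ?_, fun ρ hρ => ?_⟩
  · have hdist := (continuous_dist.tendsto (a, b)).comp hlim
    simpa [hab] using ge_of_tendsto' hdist fun k => hi (φ k)
  · obtain ⟨k, hyk, hk⟩ :=
      ((hyφ.eventually (ball_mem_nhds x₀ hρ)).and (hlim.eventually (ball_mem_nhds _ hρ))).exists
    rw [Prod.dist_eq, max_lt_iff] at hk
    exact ⟨y (φ k), i (φ k), hyk, hk⟩

section Distal

variable {X : Type*} [MetricSpace X] {T : X ≃ₜ X}

theorem LocallyAlmostPeriodic.exists_iterate_mem_ball (hT : LocallyAlmostPeriodic T) (x : X)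
    {η : ℝ} (hη : 0 < η) :
    ∃ ρ > 0, ∃ N : ℕ, ∀ m : ℕ, ∃ r ≤ N, ∀ y ∈ ball x ρ, (⇑T)^[r + m] y ∈ ball x η := by
  obtain ⟨V, hV, hxV, F, ⟨N, hF⟩, hFV⟩ := hT x (ball x η) isOpen_ball (mem_ball_self hη)
  obtain ⟨ρ, hρ, hρV⟩ := Metric.isOpen_iff.mp hV x hxV
  refine ⟨ρ, hρ, N, fun m => ?_⟩
  obtain ⟨f, hf, hmf, hfm⟩ := hF m
  refine ⟨(f - m).toNat, by omega, fun y hy => hFV f hf ⟨y, hρV hy, ?_⟩⟩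
  rw [← zIter_natCast]; congr 1; omega

variable [CompactSpace X]

theorem equicontinuousAt_of_distal_of_locallyAlmostPeriodic (hd : Distal T)
    (hlap : LocallyAlmostPeriodic T) (x₀ : X) : EquicontinuousAt (fun n : ℕ => (⇑T)^[n]) x₀ := by
  by_contra hne
  obtain ⟨a, b, hab, hclose⟩ := exists_ne_of_not_equicontinuousAt hne
  obtain ⟨δ, hδ, hfar⟩ := hd a b hab
  obtain ⟨ρ, hρ, N, hret⟩ := hlap.exists_iterate_mem_ball x₀ (show 0 < δ / 4 by positivity)
  have hunif : UniformEquicontinuous fun r : Fin (N + 1) => (⇑T)^[r] :=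
    uniformEquicontinuous_finite.2 fun r =>
      CompactSpace.uniformContinuous_of_continuous (T.continuous.iterate r)
  obtain ⟨σ, hσ, hT⟩ := Metric.uniformEquicontinuous_iff.mp hunif (δ / 4) (by positivity)
  obtain ⟨y, n, hy, hna, hnb⟩ := hclose (min ρ σ) (lt_min hρ hσ)
  obtain ⟨r, hrN, hr⟩ := hret n
  have hx₀r := hr x₀ (mem_ball_self hρ)
  have hyr := hr y (mem_ball.2 (hy.trans_le (min_le_left _ _)))
  rw [mem_ball, Function.iterate_add_apply] at hx₀r hyr
  have ha : dist ((⇑T)^[r] ((⇑T)^[n] x₀)) ((⇑T)^[r] a) < δ / 4 :=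
    hT _ _ (hna.trans_le (min_le_right _ _)) ⟨r, Nat.lt_succ_of_le hrN⟩
  have hb : dist ((⇑T)^[r] ((⇑T)^[n] y)) ((⇑T)^[r] b) < δ / 4 :=
    hT _ _ (hnb.trans_le (min_le_right _ _)) ⟨r, Nat.lt_succ_of_le hrN⟩
  have : δ < δ := calc
    δ ≤ dist ((⇑T)^[r] a) ((⇑T)^[r] b) := hfar r
    _ ≤ dist ((⇑T)^[r] a) ((⇑T)^[r] ((⇑T)^[n] x₀))
          + dist ((⇑T)^[r] ((⇑T)^[n] x₀)) ((⇑T)^[r] ((⇑T)^[n] y))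
          + dist ((⇑T)^[r] ((⇑T)^[n] y)) ((⇑T)^[r] b) := dist_triangle4 _ _ _ _
    _ < δ / 4 + (δ / 4 + δ / 4) + δ / 4 := by
        gcongr
        · rwa [dist_comm]
        · exact (dist_triangle_right _ _ x₀).trans_lt (add_lt_add hx₀r hyr)
    _ = δ := by ring
  exact lt_irrefl δ this

end Distal

theorem equicontinuous_iff_distal_and_lap {X : Type*} [MetricSpace X] [CompactSpace X]
    (T : X ≃ₜ X) :
    Equicontinuous' T ↔ (Distal T ∧ LocallyAlmostPeriodic T) := by
  rw [equicontinuous'_iff_uniformEquicontinuous]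
  constructor
  · intro h
    have hℤ := uniformEquicontinuous_zIter h
    exact ⟨distal_of_uniformEquicontinuous_zIter hℤ,
      locallyAlmostPeriodic_of_uniformEquicontinuous_zIter hℤ⟩
  · rintro ⟨hd, hlap⟩
    exact CompactSpace.uniformEquicontinuous_of_equicontinuous
      (equicontinuousAt_of_distal_of_locallyAlmostPeriodic hd hlap)
end

section
/- If (X,T) is topologically transitive (has a point with dense forward orbit which is positively recurrent), then the set of recurrent points of the induced hyperspace system (K(X), T_K) is dense in K(X). -/
open TopologicalSpace Metric Set

lemma inducedMap_iterate_coe {X : Type*} [MetricSpace X] {T : X → X} (hT : Continuous T)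
    (A : NonemptyCompacts X) (n : ℕ) :
    (((inducedMap hT)^[n] A : NonemptyCompacts X) : Set X) = T^[n] '' (A : Set X) := by
  induction n with
  | zero => simp
  | succ n ih =>
    rw [Function.iterate_succ_apply']
    show T '' (((inducedMap hT)^[n] A : NonemptyCompacts X) : Set X) = _
    rw [ih, Function.iterate_succ', Set.image_comp]

theorem dense_recurrent_induced_of_transitive {X : Type*} [MetricSpace X] [CompactSpace X]
    (T : X → X) (hT : Continuous T) (hsurj : Function.Surjective T)
    (htrans : ∃ x : X, Dense (Set.range fun n : ℕ => T^[n] x) ∧ RecurrentPt T x) :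
    Dense {A : NonemptyCompacts X | RecurrentPt (inducedMap hT) A} := by
  classical
  obtain ⟨x, hdense, hrec⟩ := htrans
  rw [Metric.dense_iff]
  intro A ε hε
  set r : ℝ := ε / 3 with hr
  have hr0 : (0:ℝ) < r := by positivity
  -- finite r-net of A with centers in A
  obtain ⟨t, hts, htf, hcov⟩ :=
    EMetric.totallyBounded_iff'.1 A.isCompact.totallyBounded (ENNReal.ofReal r)
      (by simp [ENNReal.ofReal_pos, hr0])
  have hcov' : (A : Set X) ⊆ ⋃ y ∈ t, Metric.ball y r := by
    intro z hz
    obtain ⟨y, hy, hz'⟩ := Set.mem_iUnion₂.1 (hcov hz)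
    exact Set.mem_iUnion₂.2 ⟨y, hy, by
      rwa [← Metric.emetric_ball] ⟩
  -- nonempty t
  obtain ⟨a0, ha0⟩ := A.nonempty
  have htne : t.Nonempty := by
    obtain ⟨y, hy, -⟩ := Set.mem_iUnion₂.1 (hcov' ha0); exact ⟨y, hy⟩
  -- pick orbit times close to each center
  have hpick : ∀ a ∈ t, ∃ k : ℕ, dist (T^[k] x) a < r := by
    intro a _
    obtain ⟨y, hy, hlt⟩ := hdense.exists_dist_lt a hr0
    obtain ⟨k, rfl⟩ := hy
    exact ⟨k, by rwa [dist_comm] at hlt⟩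
  choose! k hk using hpick
  -- the finite candidate set
  let F : Set X := (fun a => T^[k a] x) '' t
  have hFfin : F.Finite := htf.image _
  have hFne : F.Nonempty := htne.image _
  let B : NonemptyCompacts X := ⟨⟨F, hFfin.isCompact⟩, hFne⟩
  refine ⟨B, ?_, ?_⟩
  · -- dist A B < ε
    rw [Metric.mem_ball, NonemptyCompacts.dist_eq]
    have hbd : Metric.hausdorffDist (B : Set X) (A : Set X) ≤ 2 * r := by
      apply Metric.hausdorffDist_le_of_mem_dist (by positivity)
      · rintro p ⟨a, ha, rfl⟩
        exact ⟨a, hts ha, le_trans (hk a ha).le (by linarith)⟩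
      · intro q hq
        obtain ⟨a, ha, hq'⟩ := Set.mem_iUnion₂.1 (hcov' hq)
        refine ⟨T^[k a] x, ⟨a, ha, rfl⟩, ?_⟩
        have := dist_triangle q a (T^[k a] x)
        rw [Metric.mem_ball] at hq'
        have h2 := hk a ha
        rw [dist_comm] at h2
        linarith
    calc Metric.hausdorffDist (B : Set X) (A : Set X) ≤ 2 * r := hbd
      _ < ε := by rw [hr]; linarith
  · -- B is recurrent for the induced map
    intro δ hδ N
    -- uniform continuity of each T^[k a]
    have huc : ∀ a ∈ t, ∃ η > (0:ℝ), ∀ y z : X,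
        dist y z < η → dist (T^[k a] y) (T^[k a] z) < δ / 2 := by
      intro a _
      have : UniformContinuous (T^[k a]) :=
        CompactSpace.uniformContinuous_of_continuous (hT.iterate _)
      obtain ⟨η, hη, h⟩ := Metric.uniformContinuous_iff.1 this (δ/2) (by linarith)
      exact ⟨η, hη, fun y z hyz => h hyz⟩
    choose! η hη0 hηp using huc
    -- minimal modulus over the finite set t
    set s : Finset X := htf.toFinset with hs
    have hsne : s.Nonempty := by
      rwa [hs, Set.Finite.toFinset_nonempty]
    set η0 : ℝ := s.inf' hsne η with hη0def
    have hη0pos : 0 < η0 := by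
      rw [hη0def, Finset.lt_inf'_iff]
      intro b hb
      exact hη0 b (htf.mem_toFinset.1 hb)
    obtain ⟨n, hnN, hn⟩ := hrec η0 hη0pos N
    refine ⟨n, hnN, ?_⟩
    rw [NonemptyCompacts.dist_eq, inducedMap_iterate_coe]
    have hkey : ∀ a ∈ t, dist (T^[n] (T^[k a] x)) (T^[k a] x) < δ / 2 := by
      intro a ha
      have hcomm : T^[n] (T^[k a] x) = T^[k a] (T^[n] x) := by
        rw [← Function.iterate_add_apply, ← Function.iterate_add_apply, Nat.add_comm]
      rw [hcomm]
      apply hηp a ha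
      exact lt_of_lt_of_le hn (Finset.inf'_le _ (htf.mem_toFinset.2 ha))
    have hbd : Metric.hausdorffDist (T^[n] '' (B : Set X)) (B : Set X) ≤ δ / 2 := by
      apply Metric.hausdorffDist_le_of_mem_dist (by linarith)
      · rintro p ⟨q, ⟨a, ha, rfl⟩, rfl⟩
        exact ⟨T^[k a] x, ⟨a, ha, rfl⟩, (hkey a ha).le⟩
      · rintro q ⟨a, ha, rfl⟩
        exact ⟨T^[n] (T^[k a] x), Set.mem_image_of_mem _ ⟨a, ha, rfl⟩, by
          rw [dist_comm]; exact (hkey a ha).le⟩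
    linarith
end

section
/- Consider the skew product T on the 2-torus 𝕋² = (ℝ/ℤ)² defined by T(x,y) = (x+α, x+y) with α irrational. Then the circle A = 𝕋¹ × {y₀} is not a positively recurrent point of the induced hyperspace system (K(𝕋²), T_K): there is ε₀ > 0 such that d_H(T_K^n A, A) ≥ ε₀ for all n ≥ 1. -/
open Metric Set

local notation "𝕋" => AddCircle (1 : ℝ)

private lemma iter_formula (α : ℝ) (n : ℕ) (x y : 𝕋) :
    (fun p : 𝕋 × 𝕋 => (p.1 + (α : 𝕋), p.1 + p.2))^[n] (x, y)
      = (x + n • (α : 𝕋), y + n • x + (n.choose 2) • (α : 𝕋)) := by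
  induction n with
  | zero => simp
  | succ n ih =>
      rw [Function.iterate_succ_apply', ih]
      have h2 : (n + 1).choose 2 = n + n.choose 2 := by
        rw [Nat.choose_succ_succ, Nat.choose_one_right]
      simp only [Prod.mk.injEq, h2, succ_nsmul, add_nsmul]
      constructor <;> abel

private lemma nsmul_surj (n : ℕ) (hn : 1 ≤ n) (c : 𝕋) : ∃ x : 𝕋, n • x = c := by
  obtain ⟨r, rfl⟩ := QuotientAddGroup.mk_surjective c
  refine ⟨((r / n : ℝ) : 𝕋), ?_⟩
  have : (n : ℕ) • ((r / n : ℝ) : 𝕋) = ((n • (r / n) : ℝ) : 𝕋) := by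
    rfl
  rw [this]
  congr 1
  rw [nsmul_eq_mul]
  field_simp

theorem circle_not_recurrent_in_hyperspace (α : ℝ) (hα : Irrational α) (y₀ : 𝕋) :
    ∃ ε₀ > (0:ℝ), ∀ n : ℕ, 1 ≤ n →
      ε₀ ≤ Metric.hausdorffDist
        ((fun p : 𝕋 × 𝕋 => (p.1 + (α : 𝕋), p.1 + p.2))^[n] '' (Set.univ ×ˢ {y₀}))
        (Set.univ ×ˢ {y₀}) := by
  refine ⟨1/2, by norm_num, fun n hn => ?_⟩
  set f := fun p : 𝕋 × 𝕋 => (p.1 + (α : 𝕋), p.1 + p.2) with hf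
  set A : Set (𝕋 × 𝕋) := Set.univ ×ˢ {y₀} with hA
  -- choose x with n • x = half - choose 2 • α
  set half : 𝕋 := (((1:ℝ)/2 : ℝ) : 𝕋) with hhalf
  obtain ⟨x, hx⟩ := nsmul_surj n hn (half - (n.choose 2) • (α : 𝕋))
  set p : 𝕋 × 𝕋 := f^[n] (x, y₀) with hp
  have hpA : p ∈ f^[n] '' A := ⟨(x, y₀), by simp [hA], rfl⟩
  have hp2 : p.2 = y₀ + half := by
    rw [hp, iter_formula, hx]
    simp
    abel
  have hdist : dist p.2 y₀ = 1/2 := by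
    rw [hp2]
    have : dist (y₀ + half) y₀ = ‖half‖ := by
      rw [dist_eq_norm]
      congr 1
      abel
    rw [this, hhalf, (AddCircle.norm_coe_eq_abs_iff (p := (1:ℝ)) (by norm_num)).2 (by rw [abs_of_nonneg] <;> norm_num)]
    norm_num
  have hAne : A.Nonempty := ⟨(0, y₀), by simp [hA]⟩
  have hBne : (f^[n] '' A).Nonempty := ⟨p, hpA⟩
  have hedist : EMetric.hausdorffEdist (f^[n] '' A) A ≠ ⊤ := by
    apply Metric.hausdorffEdist_ne_top_of_nonempty_of_bounded hBne hAne
    · exact (isCompact_univ.isBounded).subset (Set.subset_univ _)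
    · exact (isCompact_univ.isBounded).subset (Set.subset_univ _)
  have hinf : (1:ℝ)/2 ≤ Metric.infDist p A := by
    rw [Metric.infDist_eq_iInf]
    haveI := hAne.to_subtype
    refine le_ciInf fun q' => ?_
    obtain ⟨q, hq⟩ := q'
    simp only [hA, Set.mem_prod, Set.mem_univ, Set.mem_singleton_iff, true_and] at hq
    calc (1:ℝ)/2 = dist p.2 q.2 := by rw [hq, hdist]
      _ ≤ dist p q := by rw [Prod.dist_eq]; exact le_max_right _ _
  calc (1:ℝ)/2 ≤ Metric.infDist p A := hinf
    _ ≤ Metric.hausdorffDist (f^[n] '' A) A := Metric.infDist_le_hausdorffDist_of_mem hpA hedist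
end

section
/- Define γ = ∑_{j=1}^∞ 1/n_j where n₁ = 100 and n_{j+1} = (n₁ n₂ ⋯ n_j)³. Then for every k ∈ ℕ, |e^{2πi n_k γ} − 1| < 14/n_k², and for all k ∈ ℕ and l ≥ 2, |e^{2πi n_k n_l γ} − 1| < 14/(n_k n_l). -/
/-!
Write `P_j = n_1 ⋯ n_j`. The recursion says `n_{j+1} = P_j ^ 3`, hence `P_{j+1} = P_j ^ 4`; so
`n_j ∣ P_M` for `j ≤ M` and the terms of the series at least halve. If `n_1, …, n_M` all divide `m`,
then `m γ` is an integer plus `m ∑_{j > M} 1 / n_j ≤ 2 m / n_{M+1}`, and `|e^{2πit} - 1| ≤ 2π|t|`.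
Take `m = n_k`, `M = k` with `n_{k+1} ≥ n_k ^ 3`, and `m = n_k n_l`, `M = max k l` with
`n_{M+1} ≥ (n_k n_l) ^ 2`.
-/

open Complex Real Finset

lemma summable_and_tsum_le_of_le_half {f : ℕ → ℝ} (hf0 : ∀ j, 0 ≤ f j)
    (hf : ∀ j, f (j + 1) ≤ f j / 2) : Summable f ∧ ∑' j, f j ≤ 2 * f 0 := by
  have hgeom : ∀ j, f j ≤ f 0 * (1 / 2) ^ j := by
    intro j
    induction j with
    | zero => simp
    | succ j ih => rw [pow_succ]; linarith [hf j]
  have hsum : Summable f := (summable_geometric_two.mul_left (f 0)).of_nonneg_of_le hf0 hgeom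
  refine ⟨hsum, ?_⟩
  calc ∑' j, f j ≤ ∑' j, f 0 * (1 / 2) ^ j :=
        hsum.tsum_le_tsum hgeom (summable_geometric_two.mul_left _)
    _ = 2 * f 0 := by rw [tsum_mul_left, tsum_geometric_two, mul_comm]

lemma natCast_mul_sum_one_div_eq {ι : Type*} (s : Finset ι) (d : ι → ℕ) {m : ℕ}
    (hd : ∀ i ∈ s, d i ∣ m) :
    (m : ℝ) * ∑ i ∈ s, 1 / (d i : ℝ) = ((∑ i ∈ s, m / d i : ℕ) : ℝ) := by
  rw [Nat.cast_sum, mul_sum]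
  refine sum_congr rfl fun i hi => ?_
  rw [Nat.cast_div_charZero (hd i hi), mul_one_div]

lemma norm_exp_two_pi_I_mul_natCast_add_sub_one_le (q : ℕ) (t : ℝ) :
    ‖exp (2 * π * I * ((q : ℂ) + t)) - 1‖ ≤ 2 * π * |t| := by
  have hsplit : 2 * π * I * ((q : ℂ) + t) = q * (2 * π * I) + I * ((2 * π * t : ℝ) : ℂ) := by
    push_cast; ring
  rw [hsplit, Complex.exp_add, exp_nat_mul_two_pi_mul_I, one_mul]
  calc ‖exp (I * ((2 * π * t : ℝ) : ℂ)) - 1‖ ≤ ‖2 * π * t‖ := norm_exp_I_mul_ofReal_sub_one_le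
    _ = 2 * π * |t| := by rw [Real.norm_eq_abs, abs_mul, abs_of_pos two_pi_pos]

theorem norm_exp_two_pi_I_mul_tsum_one_div_sub_one_le {d : ℕ → ℕ}
    (hd : Summable fun j => 1 / (d (j + 1) : ℝ)) {m M : ℕ} (hdvd : ∀ j ∈ Icc 1 M, d j ∣ m) :
    ‖exp (2 * π * I * m * ((∑' j, 1 / (d (j + 1) : ℝ) : ℝ) : ℂ)) - 1‖ ≤
      2 * π * (m * ∑' j, 1 / (d (j + M + 1) : ℝ)) := by
  set T := ∑' j, 1 / (d (j + M + 1) : ℝ)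
  have hint := natCast_mul_sum_one_div_eq (range M) (fun j => d (j + 1))
    fun j hj => hdvd (j + 1) (mem_Icc.2 ⟨by omega, by simpa using hj⟩)
  have hreal : (m : ℝ) * ∑' j, 1 / (d (j + 1) : ℝ) =
      (∑ j ∈ range M, m / d (j + 1) : ℕ) + m * T := by
    rw [← hd.sum_add_tsum_nat_add M, mul_add, hint]
  have harg : 2 * π * I * m * ((∑' j, 1 / (d (j + 1) : ℝ) : ℝ) : ℂ) =
      2 * π * I * (((∑ j ∈ range M, m / d (j + 1) : ℕ) : ℂ) + ((m * T : ℝ) : ℂ)) := by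
    have := congrArg ofReal hreal
    push_cast at this ⊢
    linear_combination (2 * π * I) * this
  have hT : 0 ≤ T := tsum_nonneg fun j => by positivity
  rw [harg]
  refine (norm_exp_two_pi_I_mul_natCast_add_sub_one_le _ _).trans_eq ?_
  rw [abs_of_nonneg (by positivity)]

section LacunarySequence

variable {n : ℕ → ℕ}

lemma prod_Icc_succ_eq_pow_four (hrec : ∀ j ≥ 1, n (j + 1) = (∏ i ∈ Icc 1 j, n i) ^ 3)
    {j : ℕ} (hj : 1 ≤ j) : ∏ i ∈ Icc 1 (j + 1), n i = (∏ i ∈ Icc 1 j, n i) ^ 4 := by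
  rw [prod_Icc_succ_top (by omega), hrec j hj]
  ring

lemma pow_four_eq_prod_pow_three (hrec : ∀ j ≥ 1, n (j + 1) = (∏ i ∈ Icc 1 j, n i) ^ 3)
    {k : ℕ} (hk : 2 ≤ k) : n k ^ 4 = (∏ i ∈ Icc 1 k, n i) ^ 3 := by
  obtain ⟨j, rfl⟩ : ∃ j, k = j + 1 := ⟨k - 1, by omega⟩
  rw [prod_Icc_succ_eq_pow_four hrec (by omega), hrec j (by omega)]
  ring

lemma dvd_of_le_of_lacunary (hrec : ∀ j ≥ 1, n (j + 1) = (∏ i ∈ Icc 1 j, n i) ^ 3)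
    {j k : ℕ} (hj : 1 ≤ j) (hjk : j ≤ k) : n j ∣ n k := by
  rcases hjk.eq_or_lt with rfl | hlt
  · exact dvd_rfl
  obtain ⟨k, rfl⟩ : ∃ k', k = k' + 1 := ⟨k - 1, by omega⟩
  rw [hrec k (by omega)]
  exact (dvd_prod_of_mem n (mem_Icc.2 ⟨hj, by omega⟩)).trans (dvd_pow_self _ three_ne_zero)

lemma hundred_le_prod (h1 : n 1 = 100)
    (hrec : ∀ j ≥ 1, n (j + 1) = (∏ i ∈ Icc 1 j, n i) ^ 3) {j : ℕ} (hj : 1 ≤ j) :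
    100 ≤ ∏ i ∈ Icc 1 j, n i := by
  induction j, hj using Nat.le_induction with
  | base => simp [h1]
  | succ j hj ih =>
    rw [prod_Icc_succ_eq_pow_four hrec hj]
    exact ih.trans (Nat.le_self_pow (by norm_num) _)

lemma hundred_le (h1 : n 1 = 100) (hrec : ∀ j ≥ 1, n (j + 1) = (∏ i ∈ Icc 1 j, n i) ^ 3)
    {j : ℕ} (hj : 1 ≤ j) : 100 ≤ n j := by
  rcases hj.eq_or_lt with rfl | hlt
  · exact h1.ge
  obtain ⟨j, rfl⟩ : ∃ j', j = j' + 1 := ⟨j - 1, by omega⟩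
  rw [hrec j (by omega)]
  exact (hundred_le_prod h1 hrec (by omega)).trans (Nat.le_self_pow (by norm_num) _)

lemma natCast_pos_of_lacunary (h1 : n 1 = 100)
    (hrec : ∀ j ≥ 1, n (j + 1) = (∏ i ∈ Icc 1 j, n i) ^ 3) {j : ℕ} (hj : 1 ≤ j) :
    (0 : ℝ) < n j :=
  Nat.cast_pos.2 ((by norm_num : 0 < 100).trans_le (hundred_le h1 hrec hj))

lemma le_prod_of_mem_Icc (h1 : n 1 = 100)
    (hrec : ∀ j ≥ 1, n (j + 1) = (∏ i ∈ Icc 1 j, n i) ^ 3) {j M : ℕ} (hj : j ∈ Icc 1 M) :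
    n j ≤ ∏ i ∈ Icc 1 M, n i :=
  Nat.le_of_dvd ((by norm_num : 0 < 100).trans_le
    (hundred_le_prod h1 hrec ((mem_Icc.1 hj).1.trans (mem_Icc.1 hj).2))) (dvd_prod_of_mem n hj)

lemma pow_three_le_succ (h1 : n 1 = 100)
    (hrec : ∀ j ≥ 1, n (j + 1) = (∏ i ∈ Icc 1 j, n i) ^ 3) {k : ℕ} (hk : 1 ≤ k) :
    n k ^ 3 ≤ n (k + 1) := by
  rw [hrec k hk]
  exact Nat.pow_le_pow_left (le_prod_of_mem_Icc h1 hrec (mem_Icc.2 ⟨hk, le_rfl⟩)) 3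

lemma two_mul_le_succ (h1 : n 1 = 100)
    (hrec : ∀ j ≥ 1, n (j + 1) = (∏ i ∈ Icc 1 j, n i) ^ 3) {k : ℕ} (hk : 1 ≤ k) :
    2 * n k ≤ n (k + 1) := by
  have h100 := hundred_le h1 hrec hk
  calc 2 * n k ≤ n k * (n k * n k) := by nlinarith
    _ = n k ^ 3 := by ring
    _ ≤ n (k + 1) := pow_three_le_succ h1 hrec hk

/-- For `k = l` this is an equality: `n_k ^ 4 = P_k ^ 3 = n_{k+1}`. -/
lemma mul_sq_le_succ_max (h1 : n 1 = 100)
    (hrec : ∀ j ≥ 1, n (j + 1) = (∏ i ∈ Icc 1 j, n i) ^ 3) {k l : ℕ} (hk : 1 ≤ k) (hl : 2 ≤ l) :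
    (n k * n l) ^ 2 ≤ n (max k l + 1) := by
  rw [hrec _ (hk.trans (le_max_left k l))]
  rcases eq_or_ne k l with rfl | hkl
  · rw [max_self, ← pow_four_eq_prod_pow_three hrec hl]
    exact (by ring : (n k * n k) ^ 2 = n k ^ 4).le
  set P := ∏ i ∈ Icc 1 (max k l), n i
  have hP : 100 ≤ P := hundred_le_prod h1 hrec (hk.trans (le_max_left k l))
  have hdvd : n k * n l ∣ P := by
    rw [← prod_pair hkl]
    refine prod_dvd_prod_of_subset _ _ n fun i hi => ?_
    simp only [mem_insert, mem_singleton] at hi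
    rcases hi with rfl | rfl <;> simp only [mem_Icc] <;> omega
  calc (n k * n l) ^ 2 ≤ P ^ 2 := Nat.pow_le_pow_left (Nat.le_of_dvd (by omega) hdvd) 2
    _ ≤ P ^ 3 := Nat.pow_le_pow_right (by omega) (by norm_num)

lemma summable_and_tsum_tail_le (h1 : n 1 = 100)
    (hrec : ∀ j ≥ 1, n (j + 1) = (∏ i ∈ Icc 1 j, n i) ^ 3) (M : ℕ) :
    (Summable fun j => 1 / (n (j + M + 1) : ℝ)) ∧
      ∑' j, 1 / (n (j + M + 1) : ℝ) ≤ 2 / n (M + 1) := by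
  have hhalf : ∀ j, 1 / (n (j + 1 + M + 1) : ℝ) ≤ 1 / (n (j + M + 1) : ℝ) / 2 := fun j => by
    have hpos : (0 : ℝ) < n (j + M + 1) := natCast_pos_of_lacunary h1 hrec (by omega)
    rw [div_div, show j + 1 + M + 1 = (j + M + 1) + 1 by ring]
    refine one_div_le_one_div_of_le (by positivity) ?_
    rw [mul_comm]
    exact_mod_cast two_mul_le_succ h1 hrec (by omega)
  simpa only [zero_add, mul_one_div] using
    summable_and_tsum_le_of_le_half (f := fun j => 1 / (n (j + M + 1) : ℝ))
      (fun j => by positivity) hhalf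

theorem norm_exp_two_pi_I_mul_tsum_lacunary_sub_one_lt (h1 : n 1 = 100)
    (hrec : ∀ j ≥ 1, n (j + 1) = (∏ i ∈ Icc 1 j, n i) ^ 3) {m M : ℕ}
    (hdvd : ∀ j ∈ Icc 1 M, n j ∣ m) {c : ℝ} (hc : 0 < c) (hmc : m * c ≤ n (M + 1)) :
    ‖exp (2 * π * I * m * ((∑' j, 1 / (n (j + 1) : ℝ) : ℝ) : ℂ)) - 1‖ < 14 / c := by
  have hsum : Summable fun j => 1 / (n (j + 1) : ℝ) := by
    simpa only [add_zero] using (summable_and_tsum_tail_le h1 hrec 0).1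
  have hN : (0 : ℝ) < n (M + 1) := natCast_pos_of_lacunary h1 hrec (by omega)
  have hratio : (m : ℝ) / n (M + 1) ≤ 1 / c := by
    rw [div_le_div_iff₀ hN hc]
    linarith
  calc _ ≤ 2 * π * (m * ∑' j, 1 / (n (j + M + 1) : ℝ)) :=
        norm_exp_two_pi_I_mul_tsum_one_div_sub_one_le hsum hdvd
    _ ≤ 2 * π * (m * (2 / n (M + 1))) := by gcongr; exact (summable_and_tsum_tail_le h1 hrec M).2
    _ = 4 * π * (m / n (M + 1)) := by ring
    _ ≤ 4 * π * (1 / c) := by gcongr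
    _ < 14 / c := by
      rw [mul_one_div]
      gcongr
      linarith [pi_lt_d2]

end LacunarySequence

theorem exp_estimates_for_lacunary_sum (n : ℕ → ℕ) (h1 : n 1 = 100)
    (hrec : ∀ j ≥ 1, n (j + 1) = (∏ i ∈ Finset.Icc 1 j, n i) ^ 3)
    (γ : ℝ) (hγ : γ = ∑' j : ℕ, 1 / (n (j + 1) : ℝ)) :
    (∀ k ≥ 1,
        ‖Complex.exp (2 * Real.pi * Complex.I * (n k : ℂ) * (γ : ℂ)) - 1‖ <
          14 / (n k : ℝ) ^ 2) ∧
      (∀ k ≥ 1, ∀ l ≥ 2,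
        ‖Complex.exp (2 * Real.pi * Complex.I * ((n k : ℂ) * (n l : ℂ)) * (γ : ℂ)) - 1‖ <
          14 / ((n k : ℝ) * (n l : ℝ))) := by
  subst hγ
  have hpos : ∀ j ≥ 1, (0 : ℝ) < n j := fun _ => natCast_pos_of_lacunary h1 hrec
  refine ⟨fun k hk => ?_, fun k hk l hl => ?_⟩
  · refine norm_exp_two_pi_I_mul_tsum_lacunary_sub_one_lt h1 hrec
      (fun j hj => dvd_of_le_of_lacunary hrec (mem_Icc.1 hj).1 (mem_Icc.1 hj).2)
      (pow_pos (hpos k hk) 2) ?_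
    rw [← pow_succ']
    exact_mod_cast pow_three_le_succ h1 hrec hk
  · have hdvd : ∀ j ∈ Icc 1 (max k l), n j ∣ n k * n l := fun j hj => by
      obtain ⟨hj1, hjM⟩ := mem_Icc.1 hj
      rcases le_max_iff.1 hjM with hjk | hjl
      · exact (dvd_of_le_of_lacunary hrec hj1 hjk).mul_right _
      · exact (dvd_of_le_of_lacunary hrec hj1 hjl).mul_left _
    simpa only [Nat.cast_mul] using norm_exp_two_pi_I_mul_tsum_lacunary_sub_one_lt h1 hrec hdvd
      (mul_pos (hpos k hk) (hpos l (by omega)))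
      (by push_cast; rw [← sq]; exact_mod_cast mul_sq_le_succ_max h1 hrec hk hl)
end
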